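/- arXiv:2602.23048 — 6 statements merged into one kernel-verified Lean document; each statement's English description precedes it below -/
import Mathlib

section
/- For every (x₀,y₀,z₀) ∈ ℝ³ and every m ∈ ℕ, the second coordinate of T^m(x₀,y₀,z₀) equals y₀ + (x₀ − x₀^(2^m))/2 and the third coordinate equals z₀ + (x₀ − x₀^(2^m))/2. -/
/-- The BBPSSW recurrence map `T(x,y,z) = (x², y + x(1−x)/2, z + x(1−x)/2)`. -/
noncomputable def bbpssw : ℝ × ℝ × ℝ → ℝ × ℝ × ℝ :=
  fun p => (p.1 ^ 2, p.2.1 + p.1 * (1 - p.1) / 2, p.2.2 + p.1 * (1 - p.1) / 2)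

/-- The second and third coordinates of the `m`-fold iterate of the BBPSSW map equal
`y₀ + (x₀ − x₀^(2^m))/2` and `z₀ + (x₀ − x₀^(2^m))/2`, respectively. -/
theorem bbpssw_iterate_snd_trd (x₀ y₀ z₀ : ℝ) (m : ℕ) :
    (bbpssw^[m] (x₀, y₀, z₀)).2.1 = y₀ + (x₀ - x₀ ^ (2 ^ m)) / 2 ∧
    (bbpssw^[m] (x₀, y₀, z₀)).2.2 = z₀ + (x₀ - x₀ ^ (2 ^ m)) / 2 := by
  induction m generalizing x₀ y₀ z₀ with
  | zero => simp
  | succ m ih =>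
    rw [Function.iterate_succ_apply]
    obtain ⟨h1, h2⟩ := ih (x₀ ^ 2) (y₀ + x₀ * (1 - x₀) / 2) (z₀ + x₀ * (1 - x₀) / 2)
    refine ⟨?_, ?_⟩ <;> simp only [bbpssw, h1, h2] <;> rw [pow_succ 2 m, pow_mul'] <;> ring
end

section
/- For every η ∈ (0,1] and every m ∈ ℕ, the fidelity of the m-th BBPSSW iterate starting from (1−η, η, 0) satisfies F(T^m(1−η, η, 0)) = (1 + (1−η)^(2^m))/2. -/
/-- The fidelity functional `F(x,y,z) = x + (y+z)/2`. -/
noncomputable def fidelity : ℝ × ℝ × ℝ → ℝ :=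
  fun p => p.1 + (p.2.1 + p.2.2) / 2

/-- Fidelity of the `m`-th BBPSSW iterate started from `(1−η, η, 0)`. -/
theorem bbpssw_fidelity_iterate (η : ℝ) (hη : η ∈ Set.Ioc (0 : ℝ) 1) (m : ℕ) :
    fidelity (bbpssw^[m] (1 - η, η, 0)) = (1 + (1 - η) ^ (2 ^ m)) / 2 := by
  suffices h : (bbpssw^[m] (1 - η, η, 0)).1 = (1 - η) ^ (2 ^ m) ∧
      fidelity (bbpssw^[m] (1 - η, η, 0)) = (1 + (1 - η) ^ (2 ^ m)) / 2 from h.2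
  induction m with
  | zero => simp [fidelity]; ring
  | succ m ih =>
    obtain ⟨h1, h2⟩ := ih
    rw [Function.iterate_succ_apply']
    set q := bbpssw^[m] (1 - η, η, 0) with hq
    have hpow : (1 - η) ^ 2 ^ (m + 1) = ((1 - η) ^ 2 ^ m) ^ 2 := by
      rw [← pow_mul, pow_succ]
    constructor
    · simp only [bbpssw, hpow, h1]
    · simp only [fidelity, bbpssw] at h2 ⊢
      rw [hpow, ← h1]
      nlinarith [h2]
end

section
/- For every η ∈ (0,1], the fidelity of the BBPSSW iterates starting from (1−η, η, 0) converges to the separable noise floor: lim_{m→∞} F(T^m(1−η, η, 0)) = 1/2. -/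
lemma bbpssw_fst (p : ℝ × ℝ × ℝ) (m : ℕ) : (bbpssw^[m] p).1 = p.1 ^ (2 ^ m) := by
  induction m with
  | zero => simp
  | succ n ih =>
      rw [Function.iterate_succ_apply']
      simp only [bbpssw, ih]
      rw [← pow_mul, pow_succ]

lemma bbpssw_sum (p : ℝ × ℝ × ℝ) (m : ℕ) :
    (bbpssw^[m] p).1 + (bbpssw^[m] p).2.1 + (bbpssw^[m] p).2.2 = p.1 + p.2.1 + p.2.2 := by
  induction m with
  | zero => simp
  | succ n ih =>
      rw [Function.iterate_succ_apply']
      simp only [bbpssw]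
      ring_nf
      ring_nf at ih
      linarith

/-- The fidelity of the BBPSSW iterates started from `(1−η, η, 0)` converges to `1/2`. -/
theorem bbpssw_fidelity_tendsto_half (η : ℝ) (hη : η ∈ Set.Ioc (0 : ℝ) 1) :
    Filter.Tendsto (fun m : ℕ => fidelity (bbpssw^[m] (1 - η, η, 0)))
      Filter.atTop (nhds (1 / 2)) := by
  obtain ⟨h0, h1⟩ := hη
  have hfid : ∀ m : ℕ, fidelity (bbpssw^[m] (1 - η, η, 0))
      = (1 + (1 - η) ^ (2 ^ m)) / 2 := by
    intro m
    have hs := bbpssw_sum (1 - η, η, 0) m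
    have hf := bbpssw_fst (1 - η, η, 0) m
    simp only [fidelity]
    simp only at hs hf
    rw [hf] at hs ⊢
    linarith
  simp only [hfid]
  have h2 : Filter.Tendsto (fun m : ℕ => (1 - η) ^ (2 ^ m)) Filter.atTop (nhds 0) := by
    have hbase : Filter.Tendsto (fun n : ℕ => (1 - η) ^ n) Filter.atTop (nhds 0) := by
      apply tendsto_pow_atTop_nhds_zero_of_abs_lt_one
      rw [abs_lt]; constructor <;> linarith
    exact hbase.comp (tendsto_pow_atTop_atTop_of_one_lt (α := ℕ) one_lt_two)
  have : (1 / 2 : ℝ) = (1 + 0) / 2 := by norm_num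
  rw [this]
  exact ((tendsto_const_nhds.add h2).div_const 2)
end

section
/- For every η ∈ (0,1], the sequence of BBPSSW iterates T^m(1−η, η, 0) converges in ℝ³, as m → ∞, to the separable boundary point (0, (1+η)/2, (1−η)/2). -/
lemma bbpssw_formula (x y z : ℝ) (m : ℕ) :
    bbpssw^[m] (x, y, z) = (x ^ 2 ^ m, y + (x - x ^ 2 ^ m) / 2, z + (x - x ^ 2 ^ m) / 2) := by
  induction m with
  | zero => simp
  | succ m ih =>
    rw [Function.iterate_succ_apply', ih]
    simp only [bbpssw, pow_succ, pow_mul]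
    refine Prod.ext ?_ (Prod.ext ?_ ?_) <;> simp <;> ring

/-- The BBPSSW iterates started from `(1−η, η, 0)` converge to the separable boundary point
`(0, (1+η)/2, (1−η)/2)`. -/
theorem bbpssw_iterates_tendsto_separable (η : ℝ) (hη : η ∈ Set.Ioc (0 : ℝ) 1) :
    Filter.Tendsto (fun m : ℕ => bbpssw^[m] (1 - η, η, 0))
      Filter.atTop (nhds ((0 : ℝ), (1 + η) / 2, (1 - η) / 2)) := by
  obtain ⟨h0, h1⟩ := hη
  have hx : |1 - η| < 1 := by
    rw [abs_lt]; constructor <;> linarith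
  have hpow : Filter.Tendsto (fun n : ℕ => (1 - η) ^ n) Filter.atTop (nhds 0) :=
    tendsto_pow_atTop_nhds_zero_of_abs_lt_one hx
  have h2 : Filter.Tendsto (fun m : ℕ => (2 : ℕ) ^ m) Filter.atTop Filter.atTop :=
    tendsto_pow_atTop_atTop_of_one_lt one_lt_two
  have hx2 : Filter.Tendsto (fun m : ℕ => (1 - η) ^ 2 ^ m) Filter.atTop (nhds 0) :=
    hpow.comp h2
  have key : Filter.Tendsto
      (fun m : ℕ => (((1 - η) ^ 2 ^ m : ℝ),
        (η + ((1 - η) - (1 - η) ^ 2 ^ m) / 2 : ℝ),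
        ((0 : ℝ) + ((1 - η) - (1 - η) ^ 2 ^ m) / 2 : ℝ)))
      Filter.atTop (nhds ((0 : ℝ), (1 + η) / 2, (1 - η) / 2)) := by
    have hs : Filter.Tendsto (fun m : ℕ => (((1 - η) - (1 - η) ^ 2 ^ m) / 2 : ℝ))
        Filter.atTop (nhds ((1 - η) / 2)) := by
      have := ((tendsto_const_nhds (x := (1 - η : ℝ))).sub hx2).div_const 2
      simpa using this
    have hy : Filter.Tendsto (fun m : ℕ => (η + ((1 - η) - (1 - η) ^ 2 ^ m) / 2 : ℝ))
        Filter.atTop (nhds ((1 + η) / 2)) := by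
      have := (tendsto_const_nhds (x := (η : ℝ))).add hs
      convert this using 2
      ring
    have hz : Filter.Tendsto (fun m : ℕ => ((0 : ℝ) + ((1 - η) - (1 - η) ^ 2 ^ m) / 2 : ℝ))
        Filter.atTop (nhds ((1 - η) / 2)) := by
      simpa using hs
    exact hx2.prodMk_nhds (hy.prodMk_nhds hz)
  simpa [bbpssw_formula] using key
end

section
/- Let ρ and σ be n×n complex density matrices and let {M_i}_{i∈I} be a finite POVM. Then the total-variation distance of the induced outcome distributions is bounded by the trace distance: (1/2) ∑_i |Tr(M_i ρ) − Tr(M_i σ)| ≤ (1/2) ∑_j |λ_j(ρ − σ)|, where λ_j(ρ − σ) are the (real) eigenvalues of the Hermitian matrix ρ − σ. -/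
open Matrix
open scoped ComplexOrder

/-- For density matrices `ρ, σ` and any finite POVM `{M i}`, the total-variation distance
of the induced outcome distributions is bounded by the trace distance
`(1/2) ∑ⱼ |λⱼ(ρ − σ)|`. -/
theorem povm_total_variation_le_trace_distance
    {n : ℕ} (ρ σ : Matrix (Fin n) (Fin n) ℂ)
    (hρ : ρ.PosSemidef) (hρtr : ρ.trace = 1)
    (hσ : σ.PosSemidef) (hσtr : σ.trace = 1)
    {ι : Type*} [Fintype ι] (M : ι → Matrix (Fin n) (Fin n) ℂ)
    (hM : ∀ i, (M i).PosSemidef) (hMsum : ∑ i, M i = 1) :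
    (1 / 2) * ∑ i, ‖(M i * ρ).trace - (M i * σ).trace‖ ≤
      (1 / 2) * ∑ j, |(hρ.1.sub hσ.1).eigenvalues j| := by
  set h : (ρ - σ).IsHermitian := hρ.1.sub hσ.1 with hh
  set U : Matrix (Fin n) (Fin n) ℂ := (h.eigenvectorUnitary : Matrix (Fin n) (Fin n) ℂ) with hU
  set N : ι → Matrix (Fin n) (Fin n) ℂ := fun i => star U * M i * U with hN
  have hUU : star U * U = 1 := Unitary.coe_star_mul_self _
  -- N i is PSD
  have hNpsd : ∀ i, (N i).PosSemidef := fun i => by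
    simpa [hN, Matrix.star_eq_conjTranspose] using (hM i).conjTranspose_mul_mul_same U
  -- diagonal entries of N are nonneg in ℂ order
  have hdiag : ∀ i j, 0 ≤ N i j j := by
    intro i j
    have := (hNpsd i).dotProduct_mulVec_nonneg (Pi.single j 1)
    simpa [dotProduct, Pi.single_apply, mulVec, Finset.sum_ite_eq] using this
  -- sum of N i = 1
  have hNsum : ∑ i, N i = 1 := by
    simp only [hN, mul_assoc, ← Finset.mul_sum, ← Finset.sum_mul, hMsum, one_mul]
    exact hUU
  -- trace formula
  have htr : ∀ i, (M i * ρ).trace - (M i * σ).trace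
      = ∑ j, N i j j * (h.eigenvalues j : ℂ) := by
    intro i
    have hΔ : ρ - σ = U * diagonal (Complex.ofReal ∘ h.eigenvalues) * star U :=
      h.spectral_theorem
    rw [← Matrix.trace_sub, ← Matrix.mul_sub]
    conv_lhs => rw [hΔ]
    rw [show M i * (U * diagonal (Complex.ofReal ∘ h.eigenvalues) * star U)
        = (M i * U * diagonal (Complex.ofReal ∘ h.eigenvalues)) * star U by rw [← mul_assoc, ← mul_assoc]]
    rw [Matrix.trace_mul_cycle]
    simp only [← mul_assoc]
    simp [hN, Matrix.trace, Matrix.diag, Matrix.mul_diagonal]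
  gcongr
  calc ∑ i, ‖(M i * ρ).trace - (M i * σ).trace‖
      ≤ ∑ i, ∑ j, (N i j j).re * |h.eigenvalues j| := by
        refine Finset.sum_le_sum fun i _ => ?_
        rw [htr i]
        refine (norm_sum_le _ _).trans (le_of_eq ?_)
        refine Finset.sum_congr rfl fun j _ => ?_
        have h0 := hdiag i j
        rw [Complex.nonneg_iff] at h0
        have habs : ‖N i j j‖ = (N i j j).re := by
          have him : N i j j = ((N i j j).re : ℂ) := Complex.ext rfl (by simp [h0.2])
          rw [him]
          simp [Complex.norm_real, abs_of_nonneg h0.1]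
        rw [norm_mul, habs, Complex.norm_real, Real.norm_eq_abs]
    _ = ∑ j, |h.eigenvalues j| := by
        rw [Finset.sum_comm]
        refine Finset.sum_congr rfl fun j _ => ?_
        rw [← Finset.sum_mul]
        have : ∑ i, N i j j = 1 := by
          have := congrArg (fun A : Matrix (Fin n) (Fin n) ℂ => A j j) hNsum
          simpa [Matrix.sum_apply] using this
        have h2 : ∑ i, (N i j j).re = 1 := by
          have h3 := congrArg Complex.re this
          simpa [Complex.re_sum] using h3
        rw [h2, one_mul]
end

section
/- CHSH bound for separable states: let ρ be a 4×4 separable two-qubit density matrix, i.e., ρ = ∑_i p_i · (α_i ⊗ β_i) is a finite convex combination (p_i ≥ 0, ∑ p_i = 1) of Kronecker products of 2×2 density matrices α_i, β_i. Let A₀, A₁, B₀, B₁ be Hermitian 2×2 matrices with A₀² = A₁² = B₀² = B₁² = I. Then the CHSH correlation satisfies |Tr(C·ρ)| ≤ 2, where C = A₀ ⊗ (B₀ + B₁) + A₁ ⊗ (B₀ − B₁). -/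
open Matrix Kronecker
open scoped ComplexOrder

lemma my_trace_nonneg {n : Type*} [Fintype n] [DecidableEq n]
    {M : Matrix n n ℂ} (h : M.PosSemidef) : 0 ≤ M.trace := by
  rw [Matrix.trace]
  apply Finset.sum_nonneg
  intro i _
  exact h.diag_nonneg

open scoped MatrixOrder in
lemma my_trace_mul_nonneg {n : Type*} [Fintype n] [DecidableEq n]
    {M N : Matrix n n ℂ} (hM : M.PosSemidef) (hN : N.PosSemidef) :
    0 ≤ (M * N).trace := by
  have h1 : M * N = M * (CFC.sqrt N * CFC.sqrt N) := by rw [CFC.sqrt_mul_sqrt_self N hN.nonneg]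
  have h2 : (M * (CFC.sqrt N * CFC.sqrt N)).trace = (CFC.sqrt N * M * CFC.sqrt N).trace := by
    rw [← Matrix.mul_assoc, Matrix.trace_mul_cycle]
  have h3 : (CFC.sqrt N * M * CFC.sqrt N).PosSemidef := by
    have := hM.conjTranspose_mul_mul_same (CFC.sqrt N)
    rwa [(CFC.sqrt_nonneg N).posSemidef.1.eq] at this
  rw [h1, h2]
  exact my_trace_nonneg h3

lemma psd_of_sq_eq_two_smul {n : Type*} [Fintype n] [DecidableEq n]
    {M : Matrix n n ℂ} (hM : M.IsHermitian) (h : M * M = (2 : ℂ) • M) :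
    M.PosSemidef := by
  have key : M = ((((Real.sqrt 2)⁻¹ : ℝ) : ℂ) • M)ᴴ * ((((Real.sqrt 2)⁻¹ : ℝ) : ℂ) • M) := by
    rw [Matrix.conjTranspose_smul, hM.eq, smul_mul_smul_comm, h, smul_smul]
    rw [show (star (((Real.sqrt 2)⁻¹ : ℝ) : ℂ)) = (((Real.sqrt 2)⁻¹ : ℝ) : ℂ) by
      simp [Complex.star_def, Complex.conj_ofReal]]
    have h2 : ((Real.sqrt 2 : ℝ) : ℂ) * ((Real.sqrt 2 : ℝ) : ℂ) = 2 := by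
      norm_cast
      exact Real.mul_self_sqrt (by norm_num)
    rw [show ((((Real.sqrt 2)⁻¹ : ℝ) : ℂ) * (((Real.sqrt 2)⁻¹ : ℝ) : ℂ)) * 2 = 1 by
      push_cast
      rw [← mul_inv, h2]
      norm_num]
    simp
  rw [key]
  exact Matrix.posSemidef_conjTranspose_mul_self _

lemma dicho_trace {A α : Matrix (Fin 2) (Fin 2) ℂ} (hA : A.IsHermitian)
    (hA2 : A * A = 1) (hα : α.PosSemidef) (htr : α.trace = 1) :
    ∃ r : ℝ, (A * α).trace = (r : ℂ) ∧ |r| ≤ 1 := by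
  have hreal : (starRingEnd ℂ) ((A * α).trace) = (A * α).trace := by
    have h1 : (A * α)ᴴ = α * A := by
      rw [Matrix.conjTranspose_mul, hA.eq, hα.1.eq]
    have h2 := Matrix.trace_conjTranspose (A * α)
    rw [h1, Matrix.trace_mul_comm] at h2
    exact h2.symm
  obtain ⟨r, hr⟩ := Complex.conj_eq_iff_real.mp hreal
  refine ⟨r, hr, ?_⟩
  have hminus : ((1 : Matrix (Fin 2) (Fin 2) ℂ) - A).PosSemidef := by
    apply psd_of_sq_eq_two_smul (Matrix.IsHermitian.sub Matrix.isHermitian_one hA)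
    have e : ((1 : Matrix (Fin 2) (Fin 2) ℂ) - A) * (1 - A) = 1 - A - A + A * A := by
      noncomm_ring
    rw [e, hA2]
    module
  have hplus : ((1 : Matrix (Fin 2) (Fin 2) ℂ) + A).PosSemidef := by
    apply psd_of_sq_eq_two_smul (Matrix.IsHermitian.add Matrix.isHermitian_one hA)
    have e : ((1 : Matrix (Fin 2) (Fin 2) ℂ) + A) * (1 + A) = 1 + A + A + A * A := by
      noncomm_ring
    rw [e, hA2]
    module
  have h1 : 0 ≤ (((1 : Matrix (Fin 2) (Fin 2) ℂ) - A) * α).trace := my_trace_mul_nonneg hminus hα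
  have h2 : 0 ≤ (((1 : Matrix (Fin 2) (Fin 2) ℂ) + A) * α).trace := my_trace_mul_nonneg hplus hα
  rw [Matrix.sub_mul, Matrix.trace_sub, Matrix.one_mul, htr, hr] at h1
  rw [Matrix.add_mul, Matrix.trace_add, Matrix.one_mul, htr, hr] at h2
  rw [abs_le]
  constructor
  · have : ((0 : ℝ) : ℂ) ≤ (((1 + r : ℝ)) : ℂ) := by push_cast; simpa using h2
    have := Complex.real_le_real.mp this
    linarith
  · have : ((0 : ℝ) : ℂ) ≤ (((1 - r : ℝ)) : ℂ) := by push_cast; simpa using h1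
    have := Complex.real_le_real.mp this
    linarith

lemma chsh_real_bound (a₀ a₁ b₀ b₁ : ℝ) (h₀ : |a₀| ≤ 1) (h₁ : |a₁| ≤ 1)
    (g₀ : |b₀| ≤ 1) (g₁ : |b₁| ≤ 1) :
    |a₀ * (b₀ + b₁) + a₁ * (b₀ - b₁)| ≤ 2 := by
  have key : |b₀ + b₁| + |b₀ - b₁| ≤ 2 := by
    rw [abs_le] at g₀ g₁
    rcases abs_cases (b₀ + b₁) with ⟨h1, _⟩ | ⟨h1, _⟩ <;>
      rcases abs_cases (b₀ - b₁) with ⟨h2, _⟩ | ⟨h2, _⟩ <;>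
      linarith [g₀.1, g₀.2, g₁.1, g₁.2]
  have h1 : |a₀ * (b₀ + b₁) + a₁ * (b₀ - b₁)| ≤ |a₀| * |b₀ + b₁| + |a₁| * |b₀ - b₁| := by
    refine (abs_add_le _ _).trans ?_
    rw [abs_mul, abs_mul]
  have h2 : |a₀| * |b₀ + b₁| ≤ |b₀ + b₁| :=
    mul_le_of_le_one_left (abs_nonneg _) h₀
  have h3 : |a₁| * |b₀ - b₁| ≤ |b₀ - b₁| :=
    mul_le_of_le_one_left (abs_nonneg _) h₁
  linarith

/-- CHSH bound for separable states: if `ρ = ∑ i, p i • (α i ⊗ β i)` is a finite convex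
combination of product states and `A₀, A₁, B₀, B₁` are dichotomic observables (Hermitian
with square the identity), then `|Tr(C·ρ)| ≤ 2` for the CHSH operator
`C = A₀ ⊗ (B₀ + B₁) + A₁ ⊗ (B₀ − B₁)`. -/
theorem chsh_bound_separable
    {ι : Type*} [Fintype ι] (p : ι → ℝ)
    (α β : ι → Matrix (Fin 2) (Fin 2) ℂ)
    (hp : ∀ i, 0 ≤ p i) (hpsum : ∑ i, p i = 1)
    (hα : ∀ i, (α i).PosSemidef) (hαtr : ∀ i, (α i).trace = 1)
    (hβ : ∀ i, (β i).PosSemidef) (hβtr : ∀ i, (β i).trace = 1)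
    (ρ : Matrix (Fin 2 × Fin 2) (Fin 2 × Fin 2) ℂ)
    (hρ : ρ = ∑ i, (p i : ℂ) • ((α i) ⊗ₖ (β i)))
    (A₀ A₁ B₀ B₁ : Matrix (Fin 2) (Fin 2) ℂ)
    (hA₀ : A₀.IsHermitian) (hA₁ : A₁.IsHermitian)
    (hB₀ : B₀.IsHermitian) (hB₁ : B₁.IsHermitian)
    (hA₀sq : A₀ * A₀ = 1) (hA₁sq : A₁ * A₁ = 1)
    (hB₀sq : B₀ * B₀ = 1) (hB₁sq : B₁ * B₁ = 1) :
    ‖((A₀ ⊗ₖ (B₀ + B₁) + A₁ ⊗ₖ (B₀ - B₁)) * ρ).trace‖ ≤ 2 := by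
  -- choose real expectation values
  choose a₀ ha₀ ha₀b using fun i => dicho_trace hA₀ hA₀sq (hα i) (hαtr i)
  choose a₁ ha₁ ha₁b using fun i => dicho_trace hA₁ hA₁sq (hα i) (hαtr i)
  choose b₀ hb₀ hb₀b using fun i => dicho_trace hB₀ hB₀sq (hβ i) (hβtr i)
  choose b₁ hb₁ hb₁b using fun i => dicho_trace hB₁ hB₁sq (hβ i) (hβtr i)
  have expand : ((A₀ ⊗ₖ (B₀ + B₁) + A₁ ⊗ₖ (B₀ - B₁)) * ρ).trace
      = ((∑ i, p i * (a₀ i * (b₀ i + b₁ i) + a₁ i * (b₀ i - b₁ i)) : ℝ) : ℂ) := by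
    subst hρ
    rw [Finset.mul_sum, Matrix.trace_sum]
    push_cast
    apply Finset.sum_congr rfl
    intro i _
    rw [Matrix.mul_smul, Matrix.trace_smul]
    have : (A₀ ⊗ₖ (B₀ + B₁) + A₁ ⊗ₖ (B₀ - B₁)) * (α i ⊗ₖ β i)
        = (A₀ * α i) ⊗ₖ ((B₀ + B₁) * β i) + (A₁ * α i) ⊗ₖ ((B₀ - B₁) * β i) := by
      rw [Matrix.add_mul, Matrix.mul_kronecker_mul, Matrix.mul_kronecker_mul]
    rw [this, Matrix.trace_add, Matrix.trace_kronecker, Matrix.trace_kronecker]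
    rw [Matrix.add_mul, Matrix.sub_mul, Matrix.trace_add, Matrix.trace_sub]
    rw [ha₀ i, ha₁ i, hb₀ i, hb₁ i]
    rw [smul_eq_mul]
    try push_cast
    try ring
  rw [expand, Complex.norm_real, Real.norm_eq_abs]
  calc |∑ i, p i * (a₀ i * (b₀ i + b₁ i) + a₁ i * (b₀ i - b₁ i))|
      ≤ ∑ i, |p i * (a₀ i * (b₀ i + b₁ i) + a₁ i * (b₀ i - b₁ i))| :=
        Finset.abs_sum_le_sum_abs _ _
    _ ≤ ∑ i, p i * 2 := by
        apply Finset.sum_le_sum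
        intro i _
        rw [abs_mul, abs_of_nonneg (hp i)]
        exact mul_le_mul_of_nonneg_left
          (chsh_real_bound _ _ _ _ (ha₀b i) (ha₁b i) (hb₀b i) (hb₁b i)) (hp i)
    _ = 2 := by rw [← Finset.sum_mul, hpsum, one_mul]
end
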